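/- arXiv:1601.07259 — 2 statements merged into one kernel-verified Lean document; each statement's English description precedes it below -/
import Mathlib

section
/- The subshift X of the Construction is minimal: for every x ∈ X the orbit {σ^k x : k ∈ ℤ} is dense in X. -/
open Filter MeasureTheory Topology

namespace EntDim

/-- The left shift `σ` on `A^ℤ`: `(shift x) i = x (i + 1)`. -/
def shift {A : Type*} (x : ℤ → A) : ℤ → A := fun i => x (i + 1)

/-- The shift by an integer `k`: `(shiftZ k x) i = x (i + k)`, i.e. `σ^k`. -/
def shiftZ {A : Type*} (k : ℤ) (x : ℤ → A) : ℤ → A := fun i => x (i + k)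

/-- A subshift: a nonempty closed shift-invariant subset of `A^ℤ`. -/
def IsSubshift {A : Type*} [TopologicalSpace A] (X : Set (ℤ → A)) : Prop :=
  X.Nonempty ∧ IsClosed X ∧ shift '' X = X

/-- `B_n(X)`: the set of words of length `n` occurring in `X`. -/
def wordsOf {A : Type*} (X : Set (ℤ → A)) (n : ℕ) : Set (Fin n → A) :=
  { w | ∃ x ∈ X, ∀ i : Fin n, w i = x ((i : ℕ) : ℤ) }

/-- `X` is minimal: every orbit is dense in `X`. -/
def IsMinimal {A : Type*} [TopologicalSpace A] (X : Set (ℤ → A)) : Prop :=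
  ∀ x ∈ X, X ⊆ closure { z | ∃ k : ℤ, z = shiftZ k x }

/-- `μ` is a shift-invariant Borel probability measure carried by `X`. -/
def IsInvProbOn {A : Type*} [MeasurableSpace A] (μ : Measure (ℤ → A))
    (X : Set (ℤ → A)) : Prop :=
  IsProbabilityMeasure μ ∧ MeasurePreserving shift μ μ ∧ μ X = 1

/-- The cylinder `[u] = {x ∈ X : x_i = u_i for 0 ≤ i < |u|}` of a finite word `u`. -/
def cylW {A : Type*} (X : Set (ℤ → A)) (u : List A) : Set (ℤ → A) :=
  { x | x ∈ X ∧ ∀ i : Fin u.length, x ((i : ℕ) : ℤ) = u.get i }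

/-- The `n`-cylinder `P_n(x) = {y ∈ X : y_i = x_i for 0 ≤ i < n}` of a point `x`. -/
def cylPt {A : Type*} (X : Set (ℤ → A)) (x : ℤ → A) (n : ℕ) : Set (ℤ → A) :=
  { y | y ∈ X ∧ ∀ i : ℕ, i < n → y (i : ℤ) = x (i : ℤ) }

/-- The first return time `R_n(x) = inf {k ≥ 1 : x_{k+i} = x_i for 0 ≤ i < n}`
(with the junk value `0` if no such `k` exists). -/
noncomputable def retTime {A : Type*} (x : ℤ → A) (n : ℕ) : ℕ :=
  sInf { k : ℕ | 1 ≤ k ∧ ∀ i : ℕ, i < n → x ((k : ℤ) + (i : ℕ)) = x ((i : ℕ) : ℤ) }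

/-- The sequence of pairs `(l_j, N_j)`, `j ≥ 1`, with `l_1 = l1`, `N_1 = 2^⌊√l1⌋`,
`l_{j+1} = l_j · N_j` and `N_{j+1} = (⌊√N_j⌋)!`.  (The value at `j = 0` is junk.) -/
def lN (l1 : ℕ) : ℕ → ℕ × ℕ
  | 0 => (0, 0)
  | 1 => (l1, 2 ^ Nat.sqrt l1)
  | j + 2 => ((lN l1 (j + 1)).1 * (lN l1 (j + 1)).2, Nat.factorial (Nat.sqrt (lN l1 (j + 1)).2))

/-- The length `l_j` of the words of `C_j`. -/
def lseq (l1 j : ℕ) : ℕ := (lN l1 j).1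

/-- The cardinality `N_j` of `C_j`. -/
def Nseq (l1 j : ℕ) : ℕ := (lN l1 j).2

/-- `i ∈ P_j = {2} ∪ {m² : 2 ≤ m ≤ ⌊√N⌋}` (1-based position `i`, where `N = N_j`):
the permuted (unstable) positions. -/
def PermutedIdx (N i : ℕ) : Prop :=
  i = 2 ∨ ∃ m : ℕ, 2 ≤ m ∧ m ≤ Nat.sqrt N ∧ i = m ^ 2

/-- The data of the Construction: a positive integer `l1` and ordered lists
`C j` (`j ≥ 1`) of distinct binary words (`C 0` is irrelevant), where `C 1` consists of
`N_1 = 2^⌊√l1⌋` words of length `l1`, `C j` consists of `N_j` words of length `l_j`, and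
`C (j+1)` is the set of all concatenations of the words of `C j` reordered by a
permutation preserving `P_j` and fixing every position outside `P_j`. -/
structure Construction where
  l1 : ℕ
  hl1 : 0 < l1
  C : ℕ → List (List Bool)
  nodup : ∀ j, 1 ≤ j → (C j).Nodup
  length_eq : ∀ j, 1 ≤ j → (C j).length = Nseq l1 j
  wordLength : ∀ j, 1 ≤ j → ∀ w ∈ C j, w.length = lseq l1 j
  mem_succ : ∀ j, 1 ≤ j → ∀ w : List Bool,
    w ∈ C (j + 1) ↔
      ∃ τ : Equiv.Perm (Fin (C j).length),
        (∀ i : Fin (C j).length, ¬ PermutedIdx (Nseq l1 j) ((i : ℕ) + 1) → τ i = i) ∧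
        (∀ i : Fin (C j).length, PermutedIdx (Nseq l1 j) ((i : ℕ) + 1) →
            PermutedIdx (Nseq l1 j) ((τ i : ℕ) + 1)) ∧
        w = (List.ofFn fun i : Fin (C j).length => (C j).get (τ i)).flatten

/-- The subshift `X` of the Construction: all `x ∈ {0,1}^ℤ` each of whose finite
subwords occurs as a subword of some word in some `C j`. -/
def Construction.space (c : Construction) : Set (ℤ → Bool) :=
  { x | ∀ (a : ℤ) (n : ℕ), ∃ j, 1 ≤ j ∧ ∃ w ∈ c.C j,
      (List.ofFn fun i : Fin n => x (a + (i : ℕ))) <:+: w }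

/-- The offset `t_j(x) ∈ {0, …, l_j − 1}` of the decomposition of `x` into `C j`-words
(defined as an infimum; it is unique in the Marker variant). -/
noncomputable def Construction.tOffset (c : Construction) (j : ℕ) (x : ℤ → Bool) : ℕ :=
  sInf { t : ℕ | t < lseq c.l1 j ∧ ∀ m : ℤ,
    (List.ofFn fun i : Fin (lseq c.l1 j) =>
      x (m * (lseq c.l1 j : ℤ) - (t : ℤ) + (i : ℕ))) ∈ c.C j }

/-- The Marker variant: every word of `C 1` begins with `001`, and `00` occurs in each
word of `C 1` only as its prefix. -/
structure MarkerConstruction extends Construction where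
  marker_prefix : ∀ w ∈ C 1, [false, false, true] <+: w
  marker_unique : ∀ w ∈ C 1, ∀ n : ℕ, [false, false] <+: w.drop n → n = 0


/-!
Every word occurring in `X` is a subword of some `w ∈ C_j`, and every word of `C_j` occurs in
every word of `C_{j+1}` (the blocks of `C_{j+1}` are rearrangements of all of `C_j`). A window of
length `2 l_{j+1}` of any `x ∈ X` lies inside a concatenation of `C_{j+1}`-blocks, hence contains a
whole block, hence every word of `C_j`. So every word of `y ∈ X` occurs in every `x ∈ X`.
-/

theorem _root_.List.exists_mem_infix_of_infix_flatten {α : Type*} {l : ℕ} (hl : 0 < l)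
    {L : List (List α)} (hL : ∀ v ∈ L, v.length = l) {u : List α} (hu : u <:+: L.flatten)
    (hlen : 2 * l ≤ u.length) : ∃ v ∈ L, v <:+: u := by
  obtain ⟨s, t, h⟩ := hu
  induction L generalizing s with
  | nil =>
    have : u = [] := by simp_all
    simp [this] at hlen
    omega
  | cons v L ih =>
    rw [List.append_assoc, List.flatten_cons] at h
    rcases List.append_eq_append_iff.1 h with ⟨a, hv, hut⟩ | ⟨s', -, hs'⟩
    · have ha : a.length ≤ l := by
        have := congrArg List.length hv
        simp only [List.length_append, hL v (by simp)] at this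
        omega
      rcases List.append_eq_append_iff.1 hut with ⟨e, hae, -⟩ | ⟨e, hue, he⟩
      · have := congrArg List.length hae
        simp only [List.length_append] at this
        omega
      · have hel : l ≤ e.length := by
          have := congrArg List.length hue
          simp only [List.length_append] at this
          omega
        obtain _ | ⟨v', L'⟩ := L
        · simp only [List.flatten_nil, List.nil_eq, List.append_eq_nil_iff] at he
          simp [he.1] at hel
          omega
        -- the first block after the start of `u` is a prefix of the rest of `u`
        have hv'e : v' <+: e := by
          refine List.prefix_of_prefix_length_le (List.prefix_append v' L'.flatten) ?_
            (by rw [hL v' (by simp)]; exact hel)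
          rw [← List.flatten_cons, he]
          exact List.prefix_append e t
        exact ⟨v', by simp, hue ▸ hv'e.isInfix.trans (List.suffix_append a e).isInfix⟩
    · obtain ⟨v0, hv0, hv0u⟩ := ih (fun w hw => hL w (by simp [hw])) s'
        (by rw [hs', List.append_assoc])
      exact ⟨v0, by simp [hv0], hv0u⟩

theorem exists_shiftZ_eq_of_ofFn_infix {α : Type*} {x y : ℤ → α} {a b : ℤ} {m n : ℕ}
    (h : (List.ofFn fun i : Fin m => y (a + (i : ℕ))) <:+:
      List.ofFn fun i : Fin n => x (b + (i : ℕ))) :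
    ∃ k : ℤ, ∀ i : ℤ, a ≤ i → i < a + m → shiftZ k x i = y i := by
  obtain ⟨d, hdn, hd⟩ := List.infix_iff_getElem?.1 h
  simp only [List.length_ofFn] at hdn hd
  refine ⟨b + d - a, fun i hai him => ?_⟩
  obtain ⟨j, rfl⟩ : ∃ j : ℕ, i = a + j := ⟨(i - a).toNat, by omega⟩
  have := hd j (by omega)
  rw [List.getElem?_ofFn, dif_pos (by omega), List.getElem_ofFn, Option.some_inj] at this
  simp only [shiftZ, ← this]
  congr 1
  push_cast
  ring

theorem mem_closure_orbit_of_forall_exists_shiftZ_eq {A : Type*} [TopologicalSpace A]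
    {x y : ℤ → A} (h : ∀ n : ℕ, ∃ k : ℤ, ∀ i : ℤ, i.natAbs ≤ n → shiftZ k x i = y i) :
    y ∈ closure { z | ∃ k : ℤ, z = shiftZ k x } := by
  choose k hk using h
  refine mem_closure_of_tendsto (f := fun n => shiftZ (k n) x) (b := atTop) ?_
    (Eventually.of_forall fun n => ⟨k n, rfl⟩)
  refine tendsto_pi_nhds.2 fun i => tendsto_const_nhds.congr' ?_
  filter_upwards [eventually_ge_atTop i.natAbs] with n hn
  exact (hk n i hn).symm

theorem Nseq_pos (l1 : ℕ) : ∀ {j}, 1 ≤ j → 0 < Nseq l1 j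
  | 1, _ => by simp [Nseq, lN]
  | _ + 2, _ => Nat.factorial_pos _

theorem lseq_succ (l1 : ℕ) {j : ℕ} (hj : 1 ≤ j) : lseq l1 (j + 1) = lseq l1 j * Nseq l1 j := by
  obtain ⟨j, rfl⟩ := Nat.exists_eq_add_of_le' hj
  rfl

theorem lseq_mono (l1 : ℕ) : Monotone (lseq l1) := by
  refine monotone_nat_of_le_succ fun j => ?_
  rcases Nat.eq_zero_or_pos j with rfl | hj
  · exact Nat.zero_le _
  · rw [lseq_succ l1 hj]
    exact Nat.le_mul_of_pos_right _ (Nseq_pos l1 hj)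

theorem lseq_pos {l1 : ℕ} (hl1 : 0 < l1) {j : ℕ} (hj : 1 ≤ j) : 0 < lseq l1 j :=
  hl1.trans_le (lseq_mono l1 hj)

open scoped Computability

namespace Construction

variable (c : Construction)

def lang (j : ℕ) : Language Bool := { w | w ∈ c.C j }

theorem mem_kstar_lang_of_le {j₀ j₁ : ℕ} (hj₀ : 1 ≤ j₀) (h : j₀ ≤ j₁) {w : List Bool}
    (hw : w ∈ c.C j₁) : w ∈ (c.lang j₀)∗ := by
  induction j₁, h using Nat.le_induction generalizing w with
  | base => exact le_kstar (α := Language Bool) hw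
  | succ j hj ih =>
    obtain ⟨τ, -, -, rfl⟩ := (c.mem_succ j (hj₀.trans hj) w).1 hw
    rw [← kstar_idem, Language.mem_kstar]
    refine ⟨_, rfl, fun v hv => ?_⟩
    obtain ⟨i, rfl⟩ := List.mem_ofFn.1 hv
    exact ih (List.get_mem _ _)

theorem infix_of_mem_of_mem_succ {j : ℕ} (hj : 1 ≤ j) {v w : List Bool} (hv : v ∈ c.C j)
    (hw : w ∈ c.C (j + 1)) : v <:+: w := by
  obtain ⟨τ, -, -, rfl⟩ := (c.mem_succ j hj w).1 hw
  obtain ⟨i, rfl⟩ := List.get_of_mem hv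
  exact List.infix_of_mem_flatten (List.mem_ofFn.2 ⟨τ.symm i, by simp⟩)

theorem exists_ofFn_infix_ofFn {x y : ℤ → Bool} (hx : x ∈ c.space) (hy : y ∈ c.space)
    (a : ℤ) (m : ℕ) : ∃ (b : ℤ) (n : ℕ),
      (List.ofFn fun i : Fin m => y (a + (i : ℕ))) <:+:
        List.ofFn fun i : Fin n => x (b + (i : ℕ)) := by
  obtain ⟨j, hj, wy, hwy, hywy⟩ := hy a m
  set l := lseq c.l1 (j + 1)
  obtain ⟨j₁, hj₁, w, hw, hxw⟩ := hx 0 (2 * l)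
  have hl : 0 < l := lseq_pos c.hl1 (Nat.le_add_left 1 j)
  have hj₁' : j + 1 ≤ j₁ := by
    by_contra! hlt
    have := hxw.length_le
    rw [List.length_ofFn, c.wordLength j₁ hj₁ w hw] at this
    have := lseq_mono c.l1 hlt.le
    omega
  obtain ⟨L, rfl, hL⟩ :=
    Language.mem_kstar.1 (c.mem_kstar_lang_of_le (Nat.le_add_left 1 j) hj₁' hw)
  obtain ⟨v, hvL, hvx⟩ := List.exists_mem_infix_of_infix_flatten hl
    (fun v hv => c.wordLength _ (Nat.le_add_left 1 j) v (hL v hv)) hxw (by simp)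
  exact ⟨0, 2 * l, hywy.trans <| (c.infix_of_mem_of_mem_succ hj hwy (hL v hvL)).trans hvx⟩

end Construction

/-- The subshift `X` of the Construction is minimal. -/
theorem statement2 (c : Construction) : IsMinimal c.space := by
  intro x hx y hy
  refine mem_closure_orbit_of_forall_exists_shiftZ_eq fun n => ?_
  obtain ⟨b, m, hyx⟩ := c.exists_ofFn_infix_ofFn hx hy (-n) (2 * n + 1)
  obtain ⟨k, hk⟩ := exists_shiftZ_eq_of_ofFn_infix hyx
  exact ⟨k, fun i hi => hk i (by omega) (by omega)⟩

end EntDim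
end

section
/- lim_{j→∞} (log N_j)/√(l_j) = 0. -/
open Filter MeasureTheory Topology

namespace EntDim

/-!
Since `l_{j+1} = l_j N_j` and `N_{j+1} = s!` with `s = ⌊√N_j⌋`, the bound
`log s! ≤ s log s ≤ √N_j · (log N_j) / 2` gives
`log N_{j+1} / √l_{j+1} ≤ (√N_j · log N_j / 2) / (√l_j · √N_j) = (log N_j / √l_j) / 2`,
so the ratio decays geometrically.
-/

open scoped Nat

theorem tendsto_zero_of_le_mul_of_lt_one {u : ℕ → ℝ} {c : ℝ} (hc₀ : 0 ≤ c) (hc₁ : c < 1)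
    (hu₀ : ∀ n, 0 ≤ u n) (hu : ∀ n, u (n + 1) ≤ c * u n) :
    Tendsto u atTop (𝓝 0) := by
  refine squeeze_zero hu₀ (fun n => le_geom hc₀ n fun k _ => hu k) ?_
  simpa using (tendsto_pow_atTop_nhds_zero_of_lt_one hc₀ hc₁).mul_const (u 0)

theorem log_factorial_sqrt_le (n : ℕ) :
    Real.log (Nat.sqrt n)! ≤ √(n : ℝ) * (Real.log n / 2) := by
  rcases Nat.eq_zero_or_pos n with rfl | hn
  · simp
  set s := Nat.sqrt n
  have hs₁ : (1 : ℝ) ≤ s := by exact_mod_cast Nat.sqrt_pos.2 hn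
  have hs : (s : ℝ) ≤ √(n : ℝ) := Real.nat_sqrt_le_real_sqrt
  calc Real.log (s ! : ℝ) ≤ Real.log ((s : ℝ) ^ s) :=
        Real.log_le_log (by positivity) (by exact_mod_cast Nat.factorial_le_pow s)
    _ = s * Real.log s := Real.log_pow s s
    _ ≤ √(n : ℝ) * Real.log √(n : ℝ) := by gcongr
    _ = √(n : ℝ) * (Real.log n / 2) := by rw [Real.log_sqrt (Nat.cast_nonneg n)]

section Sequence

variable (l1 : ℕ)

theorem lseq_add_two (j : ℕ) : lseq l1 (j + 2) = lseq l1 (j + 1) * Nseq l1 (j + 1) := rfl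

theorem Nseq_add_two (j : ℕ) : Nseq l1 (j + 2) = (Nat.sqrt (Nseq l1 (j + 1)))! := rfl

theorem Nseq_succ_pos : ∀ j, 0 < Nseq l1 (j + 1)
  | 0 => Nat.two_pow_pos _
  | _ + 1 => Nat.factorial_pos _

noncomputable def logRatio (j : ℕ) : ℝ := Real.log (Nseq l1 j) / √(lseq l1 j : ℝ)

theorem logRatio_succ_nonneg (j : ℕ) : 0 ≤ logRatio l1 (j + 1) :=
  div_nonneg (Real.log_nonneg (by exact_mod_cast Nseq_succ_pos l1 j)) (Real.sqrt_nonneg _)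

theorem logRatio_add_two_le (j : ℕ) : logRatio l1 (j + 2) ≤ 2⁻¹ * logRatio l1 (j + 1) := by
  set N := Nseq l1 (j + 1)
  set l := lseq l1 (j + 1)
  have hN : 0 < √(N : ℝ) := Real.sqrt_pos.2 (by exact_mod_cast Nseq_succ_pos l1 j)
  calc logRatio l1 (j + 2) = Real.log (Nat.sqrt N)! / (√(l : ℝ) * √(N : ℝ)) := by
        rw [logRatio, Nseq_add_two, lseq_add_two, Nat.cast_mul, Real.sqrt_mul (Nat.cast_nonneg _)]
    _ ≤ √(N : ℝ) * (Real.log N / 2) / (√(l : ℝ) * √(N : ℝ)) := by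
        gcongr
        exact log_factorial_sqrt_le N
    _ = 2⁻¹ * logRatio l1 (j + 1) := by
        rw [logRatio, mul_comm √(l : ℝ), mul_div_mul_left _ _ hN.ne']
        ring

end Sequence

theorem statement4_general (l1 : ℕ) :
    Tendsto (fun j : ℕ => Real.log (Nseq l1 j) / Real.sqrt (lseq l1 j)) atTop (nhds 0) := by
  rw [← tendsto_add_atTop_iff_nat 1]
  exact tendsto_zero_of_le_mul_of_lt_one (by norm_num) (by norm_num)
    (logRatio_succ_nonneg l1) (logRatio_add_two_le l1)

/-- `lim_{j→∞} (log N_j)/√(l_j) = 0`. -/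
theorem statement4 (l1 : ℕ) (hl1 : 0 < l1) :
    Tendsto (fun j : ℕ => Real.log (Nseq l1 j) / Real.sqrt (lseq l1 j)) atTop (nhds 0) :=
  statement4_general l1

end EntDim
end
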